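/- Every conflict-free edge coloring of the complete graph K_n requires at least Ω(log n) colors; more precisely, if x = ⌊log₂ n − log₂ log₂ n − 1⌋ ≥ 1, then no edge coloring of K_n with x colors is conflict-free. Equivalently, the conflict-free chromatic number of the line graph of K_n is at least Ω(log n). -/

import Mathlib

/-!
Vertices of `K_n` with the same palette (set of colours on incident edges) form a class `A`,
and with `x` colours there are at most `2 ^ x` classes, so some class has more than `x + 1`
vertices once `2 ^ x (x + 1) < n`. For an edge `uv` inside `A` the uniquely occurring colour
near `uv` lies in the common palette of `u` and `v`, which forces the edge carrying it to be `uv`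
itself; hence the edges inside `A` of each colour form a matching. At a vertex `u ∈ A` the
colours of the edges towards `A \ {u}` are then distinct, so `|A| ≤ x + 1`.
-/

open Finset Fintype Real

namespace SimpleGraph

variable {V α : Type*} {G : SimpleGraph V}

def IsConflictFreeEdgeColoring (G : SimpleGraph V) (f : G.edgeSet → α) : Prop :=
  ∀ e : G.edgeSet, ∃ c : α, ∃! e' : G.edgeSet,
    (∃ w : V, w ∈ (e : Sym2 V) ∧ w ∈ (e' : Sym2 V)) ∧ f e' = c

def edgePalette (f : G.edgeSet → α) (v : V) : Set α :=
  {c | ∃ e : G.edgeSet, v ∈ (e : Sym2 V) ∧ f e = c}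

theorem IsConflictFreeEdgeColoring.eq_of_color_eq {f : G.edgeSet → α}
    (hf : G.IsConflictFreeEdgeColoring f) {u v : V} (huv : G.Adj u v)
    (hpal : edgePalette f u = edgePalette f v) {e' : G.edgeSet} (hu : u ∈ (e' : Sym2 V))
    (hcol : f e' = f ⟨s(u, v), huv⟩) : e' = ⟨s(u, v), huv⟩ := by
  obtain ⟨c, e₀, ⟨⟨w, hw, hwe₀⟩, hc⟩, huniq⟩ := hf ⟨s(u, v), huv⟩
  have mem_e₀ : ∀ z ∈ s(u, v), c ∈ edgePalette f z → z ∈ (e₀ : Sym2 V) :=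
    fun z hz ⟨g, hzg, hgc⟩ => huniq g ⟨⟨z, hz, hzg⟩, hgc⟩ ▸ hzg
  have hcw : c ∈ edgePalette f w := ⟨e₀, hwe₀, hc⟩
  have hcu : c ∈ edgePalette f u := by
    rcases Sym2.mem_iff.mp hw with rfl | rfl
    exacts [hcw, hpal ▸ hcw]
  have he₀ : e₀ = ⟨s(u, v), huv⟩ := Subtype.ext <| (Sym2.mem_and_mem_iff huv.ne).mp
    ⟨mem_e₀ u (Sym2.mem_mk_left u v) hcu, mem_e₀ v (Sym2.mem_mk_right u v) (hpal ▸ hcu)⟩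
  subst he₀
  exact huniq e' ⟨⟨u, Sym2.mem_mk_left u v, hu⟩, hcol.trans hc⟩

theorem IsConflictFreeEdgeColoring.card_le_of_isClique [Fintype α] {f : G.edgeSet → α}
    (hf : G.IsConflictFreeEdgeColoring f) {A : Finset V} (hA : G.IsClique (A : Set V))
    {P : Set α} (hpal : ∀ v ∈ A, edgePalette f v = P) : #A ≤ card α + 1 := by
  classical
  rcases A.eq_empty_or_nonempty with rfl | ⟨u, hu⟩
  · simp
  have adj (v : A.erase u) : G.Adj u v :=
    hA hu (mem_of_mem_erase v.2) (ne_of_mem_erase v.2).symm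
  have hinj : Function.Injective fun v : A.erase u => f ⟨s(u, v), adj v⟩ := by
    intro v w hvw
    have h := hf.eq_of_color_eq (adj v) ((hpal u hu).trans (hpal v (mem_of_mem_erase v.2)).symm)
      (Sym2.mem_mk_left u w) hvw.symm
    exact Subtype.ext (Sym2.congr_right.mp (congrArg Subtype.val h)).symm
  have h := card_le_of_injective _ hinj
  rw [card_coe, card_erase_of_mem hu] at h
  omega

theorem not_isConflictFreeEdgeColoring_top [Fintype V] [Fintype α]
    (f : (⊤ : SimpleGraph V).edgeSet → α) (hV : 2 ^ card α * (card α + 1) < card V) :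
    ¬ (⊤ : SimpleGraph V).IsConflictFreeEdgeColoring f := by
  classical
  intro hf
  obtain ⟨P, hP⟩ := exists_lt_card_fiber_of_mul_lt_card (edgePalette f) (by rwa [card_set])
  have := hf.card_le_of_isClique (IsClique.top _) (A := {v | edgePalette f v = P})
    fun v hv => (mem_filter.mp hv).2
  omega

end SimpleGraph

theorem two_pow_mul_succ_lt_of_le_logb {n x : ℕ} (hn : 2 ≤ n)
    (hx : (x : ℝ) ≤ logb 2 n - logb 2 (logb 2 n) - 1) : 2 ^ x * (x + 1) < n := by
  set L := logb 2 n
  have hn₀ : (0 : ℝ) < n := by positivity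
  have hL : 1 ≤ L := by
    rw [← logb_self_eq_one (b := 2) (by norm_num)]
    exact logb_le_logb_of_le (by norm_num) (by norm_num) (by exact_mod_cast hn)
  have hlogL : 0 ≤ logb 2 L := logb_nonneg (by norm_num) hL
  have hpow : (2 : ℝ) ^ x ≤ n / (2 * L) :=
    calc (2 : ℝ) ^ x = 2 ^ (x : ℝ) := (rpow_natCast 2 x).symm
      _ ≤ 2 ^ (L - (logb 2 L + 1)) := rpow_le_rpow_of_exponent_le (by norm_num) (by linarith)
      _ = n / (2 * L) := by
        rw [rpow_sub two_pos, rpow_add two_pos, rpow_logb two_pos (by norm_num) hn₀,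
          rpow_logb two_pos (by norm_num) (by linarith), rpow_one, mul_comm]
  have : ((2 ^ x * (x + 1) : ℕ) : ℝ) < n :=
    calc ((2 ^ x * (x + 1) : ℕ) : ℝ) = 2 ^ x * (x + 1) := by push_cast; ring
      _ ≤ n / (2 * L) * L := by gcongr; linarith
      _ = n / 2 := by field_simp
      _ < n := by linarith
  exact_mod_cast this

theorem completeGraph_conflict_free_lower_bound_general (n : ℕ) (hn : 2 ≤ n) (x : ℕ)
    (hx : (x : ℤ) = ⌊Real.logb 2 n - Real.logb 2 (Real.logb 2 n) - 1⌋) :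
    ∀ f : (⊤ : SimpleGraph (Fin n)).edgeSet → Fin x,
      ∃ e : (⊤ : SimpleGraph (Fin n)).edgeSet, ¬ ∃ c : Fin x,
        ∃! e' : (⊤ : SimpleGraph (Fin n)).edgeSet,
          (∃ w : Fin n, w ∈ (e : Sym2 (Fin n)) ∧ w ∈ (e' : Sym2 (Fin n))) ∧ f e' = c := by
  intro f
  have hx_le : (x : ℝ) ≤ logb 2 n - logb 2 (logb 2 n) - 1 := by
    exact_mod_cast hx ▸ Int.floor_le _
  have hcard : 2 ^ card (Fin x) * (card (Fin x) + 1) < card (Fin n) := by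
    simpa only [Fintype.card_fin] using two_pow_mul_succ_lt_of_le_logb hn hx_le
  by_contra hcf
  push Not at hcf
  exact SimpleGraph.not_isConflictFreeEdgeColoring_top f hcard hcf

/-- If `x = ⌊log₂ n − log₂ log₂ n − 1⌋ ≥ 1`, then no edge coloring of `K_n` with `x`
colors is conflict-free: some edge sees no uniquely occurring color in its closed
edge-neighborhood.  Hence conflict-free edge colorings of `K_n` need `Ω(log n)` colors. -/
theorem completeGraph_conflict_free_lower_bound (n : ℕ) (hn : 2 ≤ n) (x : ℕ)
    (hx : (x : ℤ) = ⌊Real.logb 2 n - Real.logb 2 (Real.logb 2 n) - 1⌋)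
    (hx1 : 1 ≤ x) :
    ∀ f : (⊤ : SimpleGraph (Fin n)).edgeSet → Fin x,
      ∃ e : (⊤ : SimpleGraph (Fin n)).edgeSet, ¬ ∃ c : Fin x,
        ∃! e' : (⊤ : SimpleGraph (Fin n)).edgeSet,
          (∃ w : Fin n, w ∈ (e : Sym2 (Fin n)) ∧ w ∈ (e' : Sym2 (Fin n))) ∧ f e' = c :=
  completeGraph_conflict_free_lower_bound_general n hn x hx
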